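/- If 0 < τ < 2^{1/α}·(2α/(α+1)), then the nonlinear SFTR-1/2 Crank–Nicolson scheme is uniquely solvable: for every integer n ≥ 1 and all given vectors U^0, …, U^{n−1} ∈ ℝ^{M²}, there exists a unique vector U^n ∈ ℝ^{M²} satisfying τ^{−α} Σ_{m=0}^{n} ω_m (U^{n−m} − U^0) = ε² Δ_h (U^n + U^{n−1})/2 − f(U^{n−1}, U^n). -/

import Mathlib

/-- The SFTR-1/2 weights `ω_m`. -/
noncomputable def sftrW (α : ℝ) : ℕ → ℝ
  | 0 => (2 * α / (α + 1)) ^ α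
  | 1 => -α * (2 * α / (α + 1)) ^ (α + 1)
  | (m + 2) =>
      2 * α / (((m : ℝ) + 2) * (α + 1)) *
        (((((m : ℝ) + 2) - 1) / α - α) * sftrW α (m + 1) +
          (α - 1) / (2 * α) * (((m : ℝ) + 2) - 2) * sftrW α m)

open Kronecker in
/-- The periodic second-difference matrix `D`. -/
noncomputable def matD (M : ℕ) : Matrix (Fin M) (Fin M) ℝ := fun i j =>
  if i = j then -2
  else if i.1 + 1 = j.1 ∨ j.1 + 1 = i.1 then 1
  else if (i.1 = 0 ∧ j.1 = M - 1) ∨ (j.1 = 0 ∧ i.1 = M - 1) then 1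
  else 0

open Kronecker in
/-- The discrete Laplacian `Δ_h = h⁻²(I ⊗ D + D ⊗ I)`. -/
noncomputable def lapMat (M : ℕ) (h : ℝ) : Matrix (Fin M × Fin M) (Fin M × Fin M) ℝ :=
  (h ^ 2)⁻¹ • ((1 : Matrix (Fin M) (Fin M) ℝ) ⊗ₖ matD M + matD M ⊗ₖ (1 : Matrix (Fin M) (Fin M) ℝ))

/-- The nonlinear term `f(W, U)`. -/
noncomputable def fnl {M : ℕ} (W U : Fin M × Fin M → ℝ) : Fin M × Fin M → ℝ := fun i =>
  1 / 3 * U i ^ 3 + 1 / 2 * W i ^ 2 * U i + 1 / 6 * W i ^ 3 - 1 / 2 * (U i + W i)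

/-- `(U^n)` solves the SFTR-1/2 Crank–Nicolson scheme. -/
def solvesScheme (α ε τ h : ℝ) (M : ℕ) (U : ℕ → (Fin M × Fin M → ℝ)) : Prop :=
  ∀ n : ℕ, 1 ≤ n →
    (τ ^ (-α)) • ∑ m ∈ Finset.range (n + 1), sftrW α m • (U (n - m) - U 0) =
      ε ^ 2 • (lapMat M h).mulVec ((1 / 2 : ℝ) • (U n + U (n - 1))) - fnl (U (n - 1)) (U n)

/-!
With `c = τ^{-α} ω_0 - 1/2`, which the bound on `τ` makes positive, the step reads
`c x - (ε²/2) Δ_h x + φ(x) = 0` with `φ` diagonal and monotone. The discrete Laplacian has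
nonnegative off-diagonal entries and nonpositive row sums, so for `μ` large `N = μ I + (ε²/2) Δ_h`
is entrywise nonnegative with row sums at most `μ`, and the step becomes `G(x) = N x` with `G`
diagonal and `(c + μ)`-strongly monotone in each coordinate. Inverting `G` coordinatewise turns
this into a fixed point problem for a map of Lipschitz constant `μ / (c + μ) < 1` in the sup norm,
and Banach's fixed point theorem gives existence and uniqueness.
-/

open Filter Matrix

section StronglyMonotone

variable {g : ℝ → ℝ} {κ : ℝ}

lemma mul_abs_sub_le_abs_sub_of_strongMono (hg : ∀ s t, s ≤ t → κ * (t - s) ≤ g t - g s)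
    (s t : ℝ) : κ * |t - s| ≤ |g t - g s| := by
  rcases le_total s t with hst | hts
  · rw [abs_of_nonneg (sub_nonneg.2 hst)]
    exact (hg s t hst).trans (le_abs_self _)
  · rw [abs_sub_comm, abs_of_nonneg (sub_nonneg.2 hts), abs_sub_comm]
    exact (hg t s hts).trans (le_abs_self _)

lemma surjective_of_strongMono (hκ : 0 < κ) (hcont : Continuous g)
    (hg : ∀ s t, s ≤ t → κ * (t - s) ≤ g t - g s) : Function.Surjective g := by
  refine hcont.surjective ?_ ?_
  · refine tendsto_atTop_mono' _ ?_
      (tendsto_atTop_add_const_left _ (g 0) (tendsto_id.const_mul_atTop hκ))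
    filter_upwards [eventually_ge_atTop 0] with t ht
    show g 0 + κ * t ≤ g t
    linarith [hg 0 t ht]
  · refine tendsto_atBot_mono' _ ?_
      (tendsto_atBot_add_const_left _ (g 0) (tendsto_id.const_mul_atBot hκ))
    filter_upwards [eventually_le_atBot 0] with t ht
    show g t ≤ g 0 + κ * t
    linarith [hg t 0 ht]

lemma exists_rightInverse_of_strongMono (hκ : 0 < κ) (hcont : Continuous g)
    (hg : ∀ s t, s ≤ t → κ * (t - s) ≤ g t - g s) :
    ∃ g' : ℝ → ℝ, Function.RightInverse g' g ∧ ∀ y y', κ * |g' y - g' y'| ≤ |y - y'| := by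
  have hsurj := surjective_of_strongMono hκ hcont hg
  refine ⟨Function.surjInv hsurj, Function.surjInv_eq hsurj, fun y y' => ?_⟩
  simpa only [Function.surjInv_eq hsurj] using
    mul_abs_sub_le_abs_sub_of_strongMono hg (Function.surjInv hsurj y') (Function.surjInv hsurj y)

end StronglyMonotone

lemma Matrix.abs_mulVec_apply_le {m n : Type*} [Fintype n] {N : Matrix m n ℝ} {μ : ℝ}
    (hN : ∀ i, ∑ j, |N i j| ≤ μ) (v : n → ℝ) (i : m) : |(N *ᵥ v) i| ≤ μ * ‖v‖ :=
  calc |(N *ᵥ v) i| ≤ ∑ j, |N i j| * |v j| := by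
        simpa only [mulVec, dotProduct, abs_mul] using
          Finset.abs_sum_le_sum_abs (fun j => N i j * v j) Finset.univ
    _ ≤ ∑ j, |N i j| * ‖v‖ := by
        gcongr with j
        exact norm_le_pi_norm v j
    _ ≤ μ * ‖v‖ := by
        rw [← Finset.sum_mul]
        exact mul_le_mul_of_nonneg_right (hN i) (norm_nonneg v)

section DiagonalNonlinearity

variable {ι : Type*} [Fintype ι]

theorem existsUnique_apply_eq_mulVec_of_strongMono {κ μ : ℝ} (hμ : 0 ≤ μ) (hμκ : μ < κ)
    {G : ι → ℝ → ℝ} (hcont : ∀ i, Continuous (G i))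
    (hG : ∀ i s t, s ≤ t → κ * (t - s) ≤ G i t - G i s)
    {N : Matrix ι ι ℝ} (hN : ∀ i, ∑ j, |N i j| ≤ μ) :
    ∃! x : ι → ℝ, ∀ i, G i (x i) = (N *ᵥ x) i := by
  have hκ : 0 < κ := hμ.trans_lt hμκ
  choose G' hG'G hG' using fun i => exists_rightInverse_of_strongMono hκ (hcont i) (hG i)
  set T : (ι → ℝ) → ι → ℝ := fun x i => G' i ((N *ᵥ x) i)
  have hT : ContractingWith ⟨μ / κ, div_nonneg hμ hκ.le⟩ T := by
    refine ⟨(div_lt_one hκ).2 hμκ, LipschitzWith.of_dist_le_mul fun x y =>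
      (dist_pi_le_iff (mul_nonneg (NNReal.coe_nonneg _) dist_nonneg)).2 fun i => ?_⟩
    have hlip := (hG' i ((N *ᵥ x) i) ((N *ᵥ y) i)).trans
      (by simpa only [mulVec_sub, Pi.sub_apply] using abs_mulVec_apply_le hN (x - y) i)
    show |T x i - T y i| ≤ μ / κ * dist x y
    rwa [dist_eq_norm, div_mul_eq_mul_div, le_div_iff₀' hκ]
  have hfix : ∀ x, Function.IsFixedPt T x ↔ ∀ i, G i (x i) = (N *ᵥ x) i := by
    refine fun x => ⟨fun hx i => ?_, fun hx => funext fun i => ?_⟩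
    · rw [← congrFun hx i]
      exact hG'G i _
    · have hdist := mul_abs_sub_le_abs_sub_of_strongMono (hG i) (x i) (T x i)
      rw [hG'G i, hx i, sub_self, abs_zero] at hdist
      exact sub_eq_zero.1 (abs_nonpos_iff.1 (nonpos_of_mul_nonpos_right hdist hκ))
  exact ⟨_, (hfix _).1 hT.fixedPoint_isFixedPt, fun y hy => hT.fixedPoint_unique ((hfix y).2 hy)⟩

theorem existsUnique_smul_sub_mulVec_add_eq_zero {c : ℝ} (hc : 0 < c)
    {L : Matrix ι ι ℝ} (hL : ∀ i j, i ≠ j → 0 ≤ L i j) (hLrow : ∀ i, ∑ j, L i j ≤ 0)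
    {φ : ι → ℝ → ℝ} (hcont : ∀ i, Continuous (φ i)) (hmono : ∀ i, Monotone (φ i)) :
    ∃! x : ι → ℝ, c • x - L *ᵥ x + (fun i => φ i (x i)) = 0 := by
  classical
  set μ := ∑ i, |L i i|
  have hμ : 0 ≤ μ := Finset.sum_nonneg fun i _ => abs_nonneg _
  set N : Matrix ι ι ℝ := μ • 1 + L
  have hN_apply : ∀ i j, N i j = (if i = j then μ else 0) + L i j := fun i j => by
    simp [N, one_apply]
  have hN0 : ∀ i j, 0 ≤ N i j := by
    intro i j
    rcases eq_or_ne i j with rfl | hij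
    · have : |L i i| ≤ μ := Finset.single_le_sum (f := fun i => |L i i|)
        (fun j _ => abs_nonneg _) (Finset.mem_univ i)
      rw [hN_apply, if_pos rfl]
      linarith [neg_abs_le (L i i)]
    · simpa [hN_apply, hij] using hL i j hij
  have hN : ∀ i, ∑ j, |N i j| ≤ μ := fun i => by
    rw [Finset.sum_congr rfl fun j _ => abs_of_nonneg (hN0 i j)]
    simp only [hN_apply, Finset.sum_add_distrib, Finset.sum_ite_eq, Finset.mem_univ, if_true]
    linarith [hLrow i]
  have hG : ∀ i s t, s ≤ t → (c + μ) * (t - s) ≤ ((c + μ) * t + φ i t) - ((c + μ) * s + φ i s) :=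
    fun i s t hst => by linarith [hmono i hst]
  refine (existsUnique_congr fun x => ?_).2 <| existsUnique_apply_eq_mulVec_of_strongMono
    (G := fun i s => (c + μ) * s + φ i s) hμ (lt_add_of_pos_left μ hc)
    (fun i => (continuous_const_mul (c + μ)).add (hcont i)) hG hN
  simp only [funext_iff, Pi.add_apply, Pi.sub_apply, Pi.smul_apply, Pi.zero_apply, add_mulVec,
    smul_mulVec, one_mulVec, smul_eq_mul, N]
  exact forall_congr' fun i => by constructor <;> intro h <;> linarith

end DiagonalNonlinearity

section DiscreteLaplacian

variable {M : ℕ}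

lemma matD_nonneg_of_ne {i j : Fin M} (hij : i ≠ j) : 0 ≤ matD M i j := by
  unfold matD
  rw [if_neg hij]
  split_ifs <;> norm_num

lemma matD_le_of_ne {m : ℕ} {i j : Fin (m + 1)} (hij : i ≠ j) :
    matD (m + 1) i j ≤ (if i + 1 = j then 1 else 0) + (if i - 1 = j then 1 else 0) := by
  have hnext (h : i.1 + 1 = j.1 ∨ (j.1 = 0 ∧ i.1 = m + 1 - 1)) : i + 1 = j := by
    rw [Fin.ext_iff, Fin.val_add_one]
    split_ifs with hi <;> simp only [Fin.ext_iff, Fin.val_last] at hi <;> omega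
  have hprev (h : j.1 + 1 = i.1 ∨ (i.1 = 0 ∧ j.1 = m + 1 - 1)) : i - 1 = j := by
    rw [sub_eq_iff_eq_add, eq_comm, Fin.ext_iff, Fin.val_add_one]
    split_ifs with hi <;> simp only [Fin.ext_iff, Fin.val_last] at hi <;> omega
  unfold matD
  rw [if_neg hij]
  split_ifs <;> norm_num <;> tauto

lemma sum_matD_nonpos (i : Fin M) : ∑ j, matD M i j ≤ 0 := by
  obtain _ | m := M
  · exact i.elim0
  calc ∑ j, matD (m + 1) i j
      ≤ ∑ j, ((if i = j then -2 else 0) + ((if i + 1 = j then 1 else 0) +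
          (if i - 1 = j then 1 else 0))) := by
        gcongr with j
        rcases eq_or_ne i j with rfl | hij
        · simp only [matD, if_true]; split_ifs <;> norm_num
        · simpa [hij] using matD_le_of_ne hij
    _ = 0 := by
        simp only [Finset.sum_add_distrib, Finset.sum_ite_eq, Finset.mem_univ, if_true]
        norm_num

lemma lapMat_nonneg_of_ne (h : ℝ) {p q : Fin M × Fin M} (hpq : p ≠ q) :
    0 ≤ lapMat M h p q := by
  simp only [lapMat, Matrix.smul_apply, Matrix.add_apply, kroneckerMap_apply, one_apply,
    smul_eq_mul]
  refine mul_nonneg (by positivity) ?_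
  by_cases h1 : p.1 = q.1
  · have h2 : p.2 ≠ q.2 := fun h2 => hpq (Prod.ext h1 h2)
    simp [h1, h2, matD_nonneg_of_ne h2]
  · by_cases h2 : p.2 = q.2
    · simp [h1, h2, matD_nonneg_of_ne h1]
    · simp [h1, h2]

lemma sum_lapMat_nonpos (h : ℝ) (p : Fin M × Fin M) : ∑ q, lapMat M h p q ≤ 0 := by
  simp only [lapMat, Matrix.smul_apply, Matrix.add_apply, kroneckerMap_apply, one_apply,
    smul_eq_mul, ← Finset.mul_sum, Fintype.sum_prod_type, Finset.sum_add_distrib, ite_mul, one_mul,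
    zero_mul, mul_ite, mul_one, mul_zero, Finset.sum_ite_irrel, Finset.sum_const_zero,
    Finset.sum_ite_eq, Finset.mem_univ, if_true]
  exact mul_nonpos_of_nonneg_of_nonpos (by positivity)
    (add_nonpos (sum_matD_nonpos _) (sum_matD_nonpos _))

end DiscreteLaplacian

lemma half_lt_rpow_neg_mul_sftrW_zero {α τ : ℝ} (hα : 0 < α) (hτ0 : 0 < τ)
    (hτ : τ < (2 : ℝ) ^ (1 / α) * (2 * α / (α + 1))) : 1 / 2 < τ ^ (-α) * sftrW α 0 := by
  have hK : 0 < 2 * α / (α + 1) := by positivity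
  have hτα : τ ^ α < 2 * (2 * α / (α + 1)) ^ α :=
    calc τ ^ α < ((2 : ℝ) ^ (1 / α) * (2 * α / (α + 1))) ^ α := Real.rpow_lt_rpow hτ0.le hτ hα
      _ = 2 * (2 * α / (α + 1)) ^ α := by
        rw [Real.mul_rpow (by positivity) hK.le, ← Real.rpow_mul zero_le_two, one_div,
          inv_mul_cancel₀ hα.ne', Real.rpow_one]
  rw [sftrW, Real.rpow_neg hτ0.le, inv_mul_eq_div, lt_div_iff₀ (by positivity)]
  linarith

lemma monotone_cubic (a b : ℝ) : Monotone fun s : ℝ => s ^ 3 / 3 + a ^ 2 * s / 2 + b :=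
  fun s t hst => by
    have hcube := (Odd.strictMono_pow (R := ℝ) (by decide : Odd 3)).monotone hst
    have hlin := mul_le_mul_of_nonneg_left hst (sq_nonneg a)
    dsimp only
    linarith

theorem scheme_unique_solvability_general (α ε τ h : ℝ) (M : ℕ)
    (hα : α ∈ Set.Ioo (0 : ℝ) 1)
    (hτ0 : 0 < τ) (hτ : τ < (2 : ℝ) ^ (1 / α) * (2 * α / (α + 1))) :
    ∀ n : ℕ, 1 ≤ n → ∀ U : ℕ → (Fin M × Fin M → ℝ),
      ∃! x : Fin M × Fin M → ℝ,
        (τ ^ (-α)) • (sftrW α 0 • (x - U 0) +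
            ∑ m ∈ Finset.Icc 1 n, sftrW α m • (U (n - m) - U 0)) =
          ε ^ 2 • (lapMat M h).mulVec ((1 / 2 : ℝ) • (x + U (n - 1))) -
            fnl (U (n - 1)) x := by
  intro n _ U
  -- `E x = 0` is the scheme; `E 0` collects its terms that do not involve `x`.
  set E : (Fin M × Fin M → ℝ) → Fin M × Fin M → ℝ := fun x =>
    (τ ^ (-α)) • (sftrW α 0 • (x - U 0) + ∑ m ∈ Finset.Icc 1 n, sftrW α m • (U (n - m) - U 0)) -
      (ε ^ 2 • (lapMat M h).mulVec ((1 / 2 : ℝ) • (x + U (n - 1))) - fnl (U (n - 1)) x)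
  have hE : ∀ x, (τ ^ (-α) * sftrW α 0 - 1 / 2) • x - ((ε ^ 2 / 2) • lapMat M h) *ᵥ x +
      (fun i => x i ^ 3 / 3 + U (n - 1) i ^ 2 * x i / 2 + E 0 i) = E x := by
    intro x
    funext i
    simp only [E, fnl, mulVec_smul, mulVec_add, smul_mulVec, mulVec_zero, Pi.add_apply,
      Pi.sub_apply, Pi.smul_apply, smul_eq_mul, Pi.zero_apply]
    ring
  have hε : (0 : ℝ) ≤ ε ^ 2 / 2 := by positivity
  refine (existsUnique_congr fun x => by rw [hE, sub_eq_zero]).1 <|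
    existsUnique_smul_sub_mulVec_add_eq_zero (L := (ε ^ 2 / 2) • lapMat M h)
      (sub_pos.2 (half_lt_rpow_neg_mul_sftrW_zero hα.1 hτ0 hτ))
      (fun p q hpq => smul_nonneg hε (lapMat_nonneg_of_ne h hpq))
      (fun p => by
        simpa only [Matrix.smul_apply, ← Finset.smul_sum] using
          smul_nonpos_of_nonneg_of_nonpos hε (sum_lapMat_nonpos h p))
      (fun i => by fun_prop) (fun i => monotone_cubic (U (n - 1) i) (E 0 i))

theorem scheme_unique_solvability (α ε τ h : ℝ) (M : ℕ)
    (hα : α ∈ Set.Ioo (0 : ℝ) 1) (hε : 0 < ε) (hh : 0 < h) (hM : 2 ≤ M)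
    (hτ0 : 0 < τ) (hτ : τ < (2 : ℝ) ^ (1 / α) * (2 * α / (α + 1))) :
    ∀ n : ℕ, 1 ≤ n → ∀ U : ℕ → (Fin M × Fin M → ℝ),
      ∃! x : Fin M × Fin M → ℝ,
        (τ ^ (-α)) • (sftrW α 0 • (x - U 0) +
            ∑ m ∈ Finset.Icc 1 n, sftrW α m • (U (n - m) - U 0)) =
          ε ^ 2 • (lapMat M h).mulVec ((1 / 2 : ℝ) • (x + U (n - 1))) -
            fnl (U (n - 1)) x :=
  scheme_unique_solvability_general α ε τ h M hα hτ0 hτ
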